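/- (Generalized Arzelà–Ascoli on [0,1] × I for an unbounded interval I.) Let I ⊆ ℝ≥0 be an interval and (𝒵^L)_{L ∈ ℕ*} functions from [0,1] × I to ℝ^p satisfying, for some C > 0: (a) ‖𝒵^L(s,t)‖ ≤ C for all s, t, L; (b) ‖𝒵^L(s,t) − 𝒵^L(s',t')‖ ≤ C|s−s'| + C|t−t'| + C/L for all s,s',t,t',L; (c) there is a bounded integrable function b : I → ℝ such that ‖𝒵^L(s,t) − 𝒵^L(s,t')‖ ≤ ∫_{t'}^t b(τ)dτ for t' ≤ t. Then there exist a subsequence (𝒵^{φ(L)}) and a Lipschitz continuous function 𝒵 : [0,1] × I → ℝ^p such that 𝒵^{φ(L)} converges to 𝒵 uniformly on [0,1] × I. -/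

import Mathlib

set_option maxHeartbeats 1000000


open MeasureTheory

/-- Generalized Arzelà–Ascoli theorem on `[0,1] × I` for a possibly unbounded interval `I`:
under a uniform bound, an almost-Lipschitz modulus of continuity, and an integrable tail
control, some subsequence converges uniformly on `[0,1] × I` to a Lipschitz limit. -/
theorem stmt_9 {p : ℕ} (I : Set ℝ) (hI : I ⊆ Set.Ici (0:ℝ)) (hIconv : Convex ℝ I)
    (C : ℝ) (hC : 0 < C)
    (Z : ℕ → ℝ → ℝ → EuclideanSpace ℝ (Fin p))
    (hbd : ∀ L, 1 ≤ L → ∀ s ∈ Set.Icc (0:ℝ) 1, ∀ t ∈ I, ‖Z L s t‖ ≤ C)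
    (hmod : ∀ L, 1 ≤ L → ∀ s ∈ Set.Icc (0:ℝ) 1, ∀ s' ∈ Set.Icc (0:ℝ) 1, ∀ t ∈ I, ∀ t' ∈ I,
      ‖Z L s t - Z L s' t'‖ ≤ C * |s - s'| + C * |t - t'| + C / L)
    (b : ℝ → ℝ) (hbInt : IntegrableOn b I) (hbBd : ∃ Cb : ℝ, ∀ t, |b t| ≤ Cb)
    (htail : ∀ L, 1 ≤ L → ∀ s ∈ Set.Icc (0:ℝ) 1, ∀ t ∈ I, ∀ t' ∈ I, t' ≤ t →
      ‖Z L s t - Z L s t'‖ ≤ ∫ τ in t'..t, b τ) :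
    ∃ φ : ℕ → ℕ, StrictMono φ ∧ (∀ L, 1 ≤ φ L) ∧
      ∃ Zlim : ℝ → ℝ → EuclideanSpace ℝ (Fin p),
        (∀ s ∈ Set.Icc (0:ℝ) 1, ∀ s' ∈ Set.Icc (0:ℝ) 1, ∀ t ∈ I, ∀ t' ∈ I,
          ‖Zlim s t - Zlim s' t'‖ ≤ C * (|s - s'| + |t - t'|)) ∧
        (∀ ε > (0:ℝ), ∃ N : ℕ, ∀ L ≥ N, ∀ s ∈ Set.Icc (0:ℝ) 1, ∀ t ∈ I,
          ‖Z (φ L) s t - Zlim s t‖ ≤ ε) := by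
  classical
  -- trivial case: I empty
  rcases Set.eq_empty_or_nonempty I with hIe | hIne
  · refine ⟨fun L => L + 1, fun a b h => Nat.succ_lt_succ h, fun L => Nat.succ_le_succ (Nat.zero_le L), 0, ?_, ?_⟩
    · intro s hs s' hs' t ht; rw [hIe] at ht; exact absurd ht (Set.notMem_empty t)
    · intro ε hε; exact ⟨0, fun L _ s _ t ht => by rw [hIe] at ht; exact absurd ht (Set.notMem_empty t)⟩
  set A : Set (ℝ × ℝ) := Set.Icc (0:ℝ) 1 ×ˢ I with hA
  -- countable dense subset of A
  obtain ⟨s0, hs0c, hs0d⟩ := TopologicalSpace.exists_countable_dense (↥A)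
  set D : Set (ℝ × ℝ) := Subtype.val '' s0 with hD
  have hDA : D ⊆ A := by rintro x ⟨y, _, rfl⟩; exact y.2
  have hDc : D.Countable := hs0c.image _
  have hAD : A ⊆ closure D := by
    intro x hx
    have : (⟨x, hx⟩ : ↥A) ∈ closure s0 := hs0d _
    have := image_closure_subset_closure_image (f := (Subtype.val : ↥A → ℝ × ℝ))
      continuous_subtype_val (Set.mem_image_of_mem _ this)
    exact this
  haveI : Countable ↥D := hDc.to_subtype
  -- diagonal extraction
  have hKcpt : IsCompact (Set.univ.pi (fun _ : ↥D => Metric.closedBall (0:EuclideanSpace ℝ (Fin p)) C)) :=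
    isCompact_univ_pi (fun _ => isCompact_closedBall 0 C)
  set F : ℕ → (↥D → EuclideanSpace ℝ (Fin p)) := fun n d => Z (n+1) (d : ℝ × ℝ).1 (d : ℝ × ℝ).2 with hF
  have hFmem : ∀ n, F n ∈ Set.univ.pi (fun _ : ↥D => Metric.closedBall (0:EuclideanSpace ℝ (Fin p)) C) := by
    intro n
    intro d _
    have hd := hDA d.2
    simp only [mem_closedBall_zero_iff]
    exact hbd (n+1) (by omega) _ hd.1 _ hd.2
  obtain ⟨g, -, φ0, hφ0, hφ0t⟩ := hKcpt.tendsto_subseq hFmem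
  set Φ : ℕ → ℕ := fun n => φ0 n + 1 with hΦ
  have hΦmono : StrictMono Φ := fun a b h => by
    show φ0 a + 1 < φ0 b + 1
    exact Nat.succ_lt_succ (hφ0 h)
  have hΦ1 : ∀ L, 1 ≤ Φ L := fun L => by
    show 1 ≤ φ0 L + 1
    exact Nat.succ_le_succ (Nat.zero_le _)
  have hΦge : ∀ n, n + 1 ≤ Φ n := fun n => by
    show n + 1 ≤ φ0 n + 1
    exact Nat.succ_le_succ hφ0.le_apply
  have hptwise : ∀ d : ↥D, Filter.Tendsto (fun n => Z (Φ n) (d : ℝ × ℝ).1 (d : ℝ × ℝ).2)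
      Filter.atTop (nhds (g d)) := by
    intro d
    have := tendsto_pi_nhds.mp hφ0t d
    exact this
  -- interval integrability
  have hOrd : I.OrdConnected := hIconv.ordConnected
  have hsub : ∀ t ∈ I, ∀ t' ∈ I, IntervalIntegrable b volume t' t := by
    intro t ht t' ht'
    exact (hbInt.mono_set (hOrd.uIcc_subset ht' ht)).intervalIntegrable
  have hnn : ∀ t ∈ I, ∀ t' ∈ I, t' ≤ t → 0 ≤ ∫ τ in t'..t, b τ := by
    intro t ht t' ht' hle
    exact le_trans (norm_nonneg _)
      (htail 1 le_rfl 0 (by norm_num) t ht t' ht' hle)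
  obtain ⟨t₀, ht₀⟩ := hIne
  set gI : ℝ → ℝ := fun t => ∫ τ in t₀..t, b τ with hgI
  have hgmem : ∀ t ∈ I ∩ Set.Ici t₀, gI t ∈ gI '' (I ∩ Set.Ici t₀) := fun t ht =>
    Set.mem_image_of_mem _ ht
  have hbdd : BddAbove (gI '' (I ∩ Set.Ici t₀)) := by
    refine ⟨∫ τ in I, |b τ|, ?_⟩
    rintro x ⟨t, ⟨htI, ht0⟩, rfl⟩
    have h1 : gI t ≤ ∫ τ in t₀..t, |b τ| := by
      have := intervalIntegral.abs_integral_le_integral_abs (f := b) (μ := volume)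
        (a := t₀) (b := t) ht0
      exact le_trans (le_abs_self _) this
    have h2 : (∫ τ in t₀..t, |b τ|) = ∫ τ in Set.Ioc t₀ t, |b τ| :=
      intervalIntegral.integral_of_le ht0
    have h3 : (∫ τ in Set.Ioc t₀ t, |b τ|) ≤ ∫ τ in I, |b τ| := by
      refine setIntegral_mono_set hbInt.abs
        (Filter.Eventually.of_forall fun x => abs_nonneg _) ?_
      exact Filter.Eventually.of_forall fun x hx =>
        hOrd.out ht₀ htI ⟨le_of_lt hx.1, hx.2⟩
    linarith
  -- the key uniform Cauchy property
  have key : ∀ ε > (0:ℝ), ∃ N : ℕ, ∀ m ≥ N, ∀ n ≥ N, ∀ s ∈ Set.Icc (0:ℝ) 1, ∀ t ∈ I,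
      dist (Z (Φ m) s t) (Z (Φ n) s t) ≤ ε := by
    intro ε hε
    set ε5 : ℝ := ε / 5 with hε5
    have hε5pos : 0 < ε5 := by positivity
    -- tail cutoff
    obtain ⟨x, ⟨T0, hT0mem, rfl⟩, hT0gt⟩ :=
      exists_lt_of_lt_csSup (⟨gI t₀, t₀, ⟨ht₀, Set.self_mem_Ici⟩, rfl⟩ :
        (gI '' (I ∩ Set.Ici t₀)).Nonempty)
        (show sSup (gI '' (I ∩ Set.Ici t₀)) - ε5 < sSup (gI '' (I ∩ Set.Ici t₀)) by linarith)
    have hT0I : T0 ∈ I := hT0mem.1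
    have htail0 : ∀ t ∈ I, T0 ≤ t → (∫ τ in T0..t, b τ) ≤ ε5 := by
      intro t htI hle
      have hadd : gI T0 + (∫ τ in T0..t, b τ) = gI t :=
        intervalIntegral.integral_add_adjacent_intervals
          (hsub T0 hT0I t₀ ht₀) (hsub t htI T0 hT0I)
      have hle2 : gI t ≤ sSup (gI '' (I ∩ Set.Ici t₀)) :=
        le_csSup hbdd (Set.mem_image_of_mem _ ⟨htI, le_trans hT0mem.2 hle⟩)
      linarith
    -- compact net
    set δ : ℝ := ε5 / (4 * C) with hδ
    have hδpos : 0 < δ := by positivity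
    set Kc : Set (ℝ × ℝ) := closure (Set.Icc (0:ℝ) 1 ×ˢ (I ∩ Set.Icc 0 T0)) with hKc
    have hKcc : IsCompact Kc := by
      refine IsCompact.of_isClosed_subset ((isCompact_Icc (a := (0:ℝ)) (b := 1)).prod (isCompact_Icc (a := (0:ℝ)) (b := T0)))
        isClosed_closure ?_
      refine closure_minimal ?_ (isClosed_Icc.prod isClosed_Icc)
      exact Set.prod_mono le_rfl Set.inter_subset_right
    have hKcD : Kc ⊆ closure D := by
      have h1 : Set.Icc (0:ℝ) 1 ×ˢ (I ∩ Set.Icc 0 T0) ⊆ A :=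
        Set.prod_mono le_rfl Set.inter_subset_left
      have h2 : Set.Icc (0:ℝ) 1 ×ˢ (I ∩ Set.Icc 0 T0) ⊆ closure D := le_trans h1 hAD
      calc Kc ⊆ closure (closure D) := closure_mono h2
        _ = closure D := closure_closure
    have hcov : Kc ⊆ ⋃ d : ↥D, Metric.ball (d : ℝ × ℝ) δ := by
      intro x hx
      obtain ⟨y, hy, hdy⟩ := Metric.mem_closure_iff.mp (hKcD hx) δ hδpos
      exact Set.mem_iUnion.mpr ⟨⟨y, hy⟩, Metric.mem_ball.mpr hdy⟩
    obtain ⟨P, hP⟩ := hKcc.elim_finite_subcover (fun d : ↥D => Metric.ball (d : ℝ × ℝ) δ)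
      (fun d => Metric.isOpen_ball) hcov
    -- N1 : kill C / Φ m
    obtain ⟨N1, hN1⟩ := exists_nat_ge (2 * C / ε5)
    have hmodN1 : ∀ m ≥ N1, C / (Φ m : ℝ) ≤ ε5 / 2 := by
      intro m hm
      have hNm : N1 ≤ Φ m := le_trans hm (le_trans (Nat.le_succ m) (hΦge m))
      have h1 : (2 * C / ε5 : ℝ) ≤ Φ m := le_trans hN1 (by exact_mod_cast hNm)
      have hpos : (0:ℝ) < 2 * C / ε5 := by positivity
      have h2 : C / (Φ m : ℝ) ≤ C / (2 * C / ε5) :=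
        div_le_div_of_nonneg_left hC.le hpos h1
      have h3 : C / (2 * C / ε5) = ε5 / 2 := by
        field_simp
      linarith
    -- N2 : convergence at the finitely many net points
    have hev : ∀ᶠ n in Filter.atTop, ∀ d ∈ P,
        dist (Z (Φ n) (d : ℝ × ℝ).1 (d : ℝ × ℝ).2) (g d) < ε5 / 2 := by
      rw [Filter.eventually_all_finset]
      intro d _
      obtain ⟨N, hN⟩ := Metric.tendsto_atTop.mp (hptwise d) (ε5 / 2) (by positivity)
      exact Filter.eventually_atTop.mpr ⟨N, hN⟩
    obtain ⟨N2, hN2⟩ := Filter.eventually_atTop.mp hev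
    refine ⟨max N1 N2, ?_⟩
    intro m hm n hn s hs t htI
    have hmN1 := le_trans (le_max_left N1 N2) hm
    have hnN1 := le_trans (le_max_left N1 N2) hn
    have hmN2 := le_trans (le_max_right N1 N2) hm
    have hnN2 := le_trans (le_max_right N1 N2) hn
    -- estimate on the compact part
    have hcompact : ∀ u ∈ I ∩ Set.Icc 0 T0,
        dist (Z (Φ m) s u) (Z (Φ n) s u) ≤ 3 * ε5 := by
      intro u hu
      have hmemKc : (s, u) ∈ Kc := subset_closure ⟨hs, hu⟩
      obtain ⟨d, hdP, hdball⟩ := Set.mem_iUnion₂.mp (hP hmemKc)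
      have hd := hDA d.2
      have hdist : dist (s, u) (d : ℝ × ℝ) < δ := Metric.mem_ball.mp hdball
      rw [Prod.dist_eq] at hdist
      have hds : |s - (d : ℝ × ℝ).1| < δ := by
        rw [← Real.dist_eq]; exact lt_of_le_of_lt (le_max_left _ _) hdist
      have hdt : |u - (d : ℝ × ℝ).2| < δ := by
        rw [← Real.dist_eq]; exact lt_of_le_of_lt (le_max_right _ _) hdist
      have hnear : ∀ k ≥ N1, dist (Z (Φ k) s u) (Z (Φ k) (d : ℝ × ℝ).1 (d : ℝ × ℝ).2) ≤ ε5 := by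
        intro k hk
        rw [dist_eq_norm]
        have := hmod (Φ k) (hΦ1 k) s hs _ hd.1 u hu.1 _ hd.2
        have hCd : C * |s - (d : ℝ × ℝ).1| + C * |u - (d : ℝ × ℝ).2| ≤ ε5 / 2 := by
          have h1 : C * |s - (d : ℝ × ℝ).1| ≤ C * δ := by
            exact mul_le_mul_of_nonneg_left hds.le hC.le
          have h2 : C * |u - (d : ℝ × ℝ).2| ≤ C * δ := by
            exact mul_le_mul_of_nonneg_left hdt.le hC.le
          have : C * δ = ε5 / 4 := by rw [hδ]; field_simp
          linarith
        have := le_trans this (by linarith [hmodN1 k hk] :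
          C * |s - (d : ℝ × ℝ).1| + C * |u - (d : ℝ × ℝ).2| + C / (Φ k : ℝ) ≤ ε5)
        exact this
      have hmid : dist (Z (Φ m) (d : ℝ × ℝ).1 (d : ℝ × ℝ).2)
          (Z (Φ n) (d : ℝ × ℝ).1 (d : ℝ × ℝ).2) ≤ ε5 := by
        have h1 := hN2 m hmN2 d hdP
        have h2 := hN2 n hnN2 d hdP
        calc dist (Z (Φ m) (d : ℝ × ℝ).1 (d : ℝ × ℝ).2) (Z (Φ n) (d : ℝ × ℝ).1 (d : ℝ × ℝ).2)
            ≤ dist (Z (Φ m) (d : ℝ × ℝ).1 (d : ℝ × ℝ).2) (g d)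
              + dist (g d) (Z (Φ n) (d : ℝ × ℝ).1 (d : ℝ × ℝ).2) := dist_triangle _ _ _
          _ ≤ ε5 / 2 + ε5 / 2 := by
              have := dist_comm (g d) (Z (Φ n) (d : ℝ × ℝ).1 (d : ℝ × ℝ).2)
              rw [this]; exact add_le_add h1.le h2.le
          _ = ε5 := by ring
      calc dist (Z (Φ m) s u) (Z (Φ n) s u)
          ≤ dist (Z (Φ m) s u) (Z (Φ m) (d : ℝ × ℝ).1 (d : ℝ × ℝ).2)
            + dist (Z (Φ m) (d : ℝ × ℝ).1 (d : ℝ × ℝ).2) (Z (Φ n) s u) := dist_triangle _ _ _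
        _ ≤ dist (Z (Φ m) s u) (Z (Φ m) (d : ℝ × ℝ).1 (d : ℝ × ℝ).2)
            + (dist (Z (Φ m) (d : ℝ × ℝ).1 (d : ℝ × ℝ).2) (Z (Φ n) (d : ℝ × ℝ).1 (d : ℝ × ℝ).2)
              + dist (Z (Φ n) (d : ℝ × ℝ).1 (d : ℝ × ℝ).2) (Z (Φ n) s u)) := by
              exact add_le_add (le_refl _) (dist_triangle _ _ _)
        _ ≤ ε5 + (ε5 + ε5) := by
            refine add_le_add (hnear m hmN1) (add_le_add hmid ?_)
            rw [dist_comm]; exact hnear n hnN1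
        _ = 3 * ε5 := by ring
    have ht0 : 0 ≤ t := hI htI
    by_cases hcase : t ≤ T0
    · have := hcompact t ⟨htI, ht0, hcase⟩
      linarith
    · push_neg at hcase
      have htails : ∀ k, dist (Z (Φ k) s t) (Z (Φ k) s T0) ≤ ε5 := by
        intro k
        rw [dist_eq_norm]
        exact le_trans (htail (Φ k) (hΦ1 k) s hs t htI T0 hT0I hcase.le)
          (htail0 t htI hcase.le)
      have hT0c := hcompact T0 ⟨hT0I, hI hT0I, le_refl T0⟩
      calc dist (Z (Φ m) s t) (Z (Φ n) s t)
          ≤ dist (Z (Φ m) s t) (Z (Φ m) s T0) + dist (Z (Φ m) s T0) (Z (Φ n) s t) :=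
            dist_triangle _ _ _
        _ ≤ dist (Z (Φ m) s t) (Z (Φ m) s T0)
            + (dist (Z (Φ m) s T0) (Z (Φ n) s T0) + dist (Z (Φ n) s T0) (Z (Φ n) s t)) :=
            add_le_add (le_refl _) (dist_triangle _ _ _)
        _ ≤ ε5 + (3 * ε5 + ε5) := by
            refine add_le_add (htails m) (add_le_add hT0c ?_)
            rw [dist_comm]; exact htails n
        _ = ε := by rw [hε5]; ring
  -- pointwise limits
  have hconv : ∀ s ∈ Set.Icc (0:ℝ) 1, ∀ t ∈ I,
      ∃ x : EuclideanSpace ℝ (Fin p), Filter.Tendsto (fun n => Z (Φ n) s t) Filter.atTop (nhds x) := by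
    intro s hs t ht
    have : CauchySeq (fun n => Z (Φ n) s t) := by
      rw [Metric.cauchySeq_iff]
      intro ε hε
      obtain ⟨N, hN⟩ := key (ε / 2) (by positivity)
      exact ⟨N, fun m hm n hn =>
        lt_of_le_of_lt (hN m hm n hn s hs t ht) (by linarith)⟩
    exact cauchySeq_tendsto_of_complete this
  set Zlim : ℝ → ℝ → EuclideanSpace ℝ (Fin p) := fun s t =>
    if h : s ∈ Set.Icc (0:ℝ) 1 ∧ t ∈ I then (hconv s h.1 t h.2).choose else 0 with hZlim
  have hZlimT : ∀ s (hs : s ∈ Set.Icc (0:ℝ) 1), ∀ t (ht : t ∈ I),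
      Filter.Tendsto (fun n => Z (Φ n) s t) Filter.atTop (nhds (Zlim s t)) := by
    intro s hs t ht
    rw [hZlim]
    simp only [dif_pos (⟨hs, ht⟩ : s ∈ Set.Icc (0:ℝ) 1 ∧ t ∈ I)]
    exact (hconv s hs t ht).choose_spec
  refine ⟨Φ, hΦmono, hΦ1, Zlim, ?_, ?_⟩
  · -- Lipschitz property
    intro s hs s' hs' t ht t' ht'
    have h1 : Filter.Tendsto (fun n => ‖Z (Φ n) s t - Z (Φ n) s' t'‖)
        Filter.atTop (nhds ‖Zlim s t - Zlim s' t'‖) :=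
      ((hZlimT s hs t ht).sub (hZlimT s' hs' t' ht')).norm
    have h2 : Filter.Tendsto (fun n => C * |s - s'| + C * |t - t'| + C / (Φ n : ℝ))
        Filter.atTop (nhds (C * |s - s'| + C * |t - t'| + 0)) := by
      refine Filter.Tendsto.add tendsto_const_nhds ?_
      refine Filter.Tendsto.div_atTop tendsto_const_nhds ?_
      exact tendsto_natCast_atTop_atTop.comp hΦmono.tendsto_atTop
    have h3 : ‖Zlim s t - Zlim s' t'‖ ≤ C * |s - s'| + C * |t - t'| + 0 := by
      refine le_of_tendsto_of_tendsto' h1 h2 ?_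
      intro n
      exact hmod (Φ n) (hΦ1 n) s hs s' hs' t ht t' ht'
    calc ‖Zlim s t - Zlim s' t'‖ ≤ C * |s - s'| + C * |t - t'| + 0 := h3
      _ = C * (|s - s'| + |t - t'|) := by ring
  · -- uniform convergence
    intro ε hε
    obtain ⟨N, hN⟩ := key ε hε
    refine ⟨N, fun L hL s hs t ht => ?_⟩
    have h1 : Filter.Tendsto (fun n => ‖Z (Φ L) s t - Z (Φ n) s t‖)
        Filter.atTop (nhds ‖Z (Φ L) s t - Zlim s t‖) :=
      (Filter.Tendsto.sub tendsto_const_nhds (hZlimT s hs t ht)).norm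
    refine le_of_tendsto h1 ?_
    filter_upwards [Filter.eventually_ge_atTop N] with n hn
    rw [← dist_eq_norm]
    exact hN L hL n hn s hs t ht
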